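/- Let T > 0, N a positive integer, τ = T/N, t_k = kτ, and fix α ∈ (0,1). Assume τ ≤ 1. Define b_1^{(n)} = 1 + τ a_1^{(n)}(α) and b_j^{(n)} = τ a_j^{(n)}(α) for 2 ≤ j ≤ n. Then for every n with 1 ≤ n ≤ N, the coefficients satisfy b_1^{(n)} > b_2^{(n)} > ⋯ > b_n^{(n)} > 0. -/

import Mathlib

/-- The kernel `ω_{1-β}(t) = t^{-β} / Γ(1-β)`. -/
noncomputable def omegaK (β t : ℝ) : ℝ := t ^ (-β) / Real.Gamma (1 - β)

/-- The L1⁺ coefficient `a_j^{(n)}(α)` on the uniform mesh `t_k = k τ`: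
`a_{n-k+1}^{(n)}(α) = (1/τ²) ∫_{t_{n-1}}^{t_n} ∫_{t_{k-1}}^{min(t, t_k)} ω_{1-α}(t-s) ds dt`,
expressed with `j = n - k + 1`, i.e. `k = n - j + 1`. -/
noncomputable def acoef (τ α : ℝ) (n j : ℕ) : ℝ :=
  (1 / τ ^ 2) * ∫ t in (((n : ℝ) - 1) * τ)..((n : ℝ) * τ),
      ∫ s in (((n : ℝ) - (j : ℝ)) * τ)..(min t (((n : ℝ) - (j : ℝ) + 1) * τ)),
        omegaK α (t - s)

/-- `b_1^{(n)} = 1 + τ a_1^{(n)}(α)` and `b_j^{(n)} = τ a_j^{(n)}(α)` for `j ≥ 2`. -/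
noncomputable def bcoef (τ α : ℝ) (n j : ℕ) : ℝ :=
  if j = 1 then 1 + τ * acoef τ α n 1 else τ * acoef τ α n j


/-!
Integrating the kernel exactly gives `τ a₁ = κ` and `τ aⱼ = κ Δ²[x ^ (2 - α)](j - 1)` for `j ≥ 2`,
where `κ = τ ^ (1 - α) / Γ(3 - α)` and `Δ²` is the centred second difference. Strict convexity
of `x ^ (2 - α)` makes these second differences positive, and strict concavity of its derivative
makes them strictly decreasing. The remaining comparison `b₁ > b₂` reads `κ (2 ^ (2 - α) - 3) < 1`;
it holds because `2 ^ (2 - α) < 4` and `κ ≤ 1` for `τ ≤ 1`, as `Γ(3 - α) > Γ(2) = 1`.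
-/

open Real intervalIntegral Set

lemma integral_add_rpow {q : ℝ} (hq : -1 < q) (c a b : ℝ) :
    ∫ t in a..b, (t + c) ^ q = ((b + c) ^ (q + 1) - (a + c) ^ (q + 1)) / (q + 1) := by
  rw [integral_comp_add_right (· ^ q), integral_rpow (Or.inl hq)]

lemma integral_sub_rpow {q : ℝ} (hq : -1 < q) (c a b : ℝ) :
    ∫ t in a..b, (t - c) ^ q = ((b - c) ^ (q + 1) - (a - c) ^ (q + 1)) / (q + 1) := by
  rw [integral_comp_sub_right (· ^ q), integral_rpow (Or.inl hq)]

noncomputable def rpowSecondDiff (p x : ℝ) : ℝ := (x + 1) ^ p - 2 * x ^ p + (x - 1) ^ p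

lemma rpowSecondDiff_pos {p x : ℝ} (hp : 1 < p) (hx : 1 ≤ x) : 0 < rpowSecondDiff p x := by
  have h := (strictConvexOn_rpow hp).2 (x := x - 1) (y := x + 1)
    (by simp only [mem_Ici]; linarith) (by simp only [mem_Ici]; linarith) (by linarith)
    (by norm_num : (0 : ℝ) < 1 / 2) (by norm_num : (0 : ℝ) < 1 / 2) (by norm_num)
  simp only [smul_eq_mul] at h
  rw [show 1 / 2 * (x - 1) + 1 / 2 * (x + 1) = x by ring] at h
  unfold rpowSecondDiff
  linarith

lemma rpow_add_rpow_add_two_lt {q t : ℝ} (hq₀ : 0 < q) (hq₁ : q < 1) (ht : 0 ≤ t) :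
    t ^ q + (t + 2) ^ q < 2 * (t + 1) ^ q := by
  have h := (strictConcaveOn_rpow hq₀ hq₁).2 (x := t) (y := t + 2)
    (by simpa using ht) (by simp only [mem_Ici]; linarith) (by linarith)
    (by norm_num : (0 : ℝ) < 1 / 2) (by norm_num : (0 : ℝ) < 1 / 2) (by norm_num)
  simp only [smul_eq_mul] at h
  rw [show 1 / 2 * t + 1 / 2 * (t + 2) = t + 1 by ring] at h
  linarith

/- The derivative `p t ^ (p - 1)` is strictly concave; integrate its midpoint inequality
over `[x - 1, x]`. -/
lemma rpowSecondDiff_add_one_lt {p x : ℝ} (hp₁ : 1 < p) (hp₂ : p < 2) (hx : 1 ≤ x) :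
    rpowSecondDiff p (x + 1) < rpowSecondDiff p x := by
  obtain ⟨q, rfl⟩ : ∃ q, p = q + 1 := ⟨p - 1, by ring⟩
  have hq₀ : 0 < q := by linarith
  have hq : -1 < q := by linarith
  have hshift (c : ℝ) :
      IntervalIntegrable (fun t : ℝ => (t + c) ^ q) MeasureTheory.volume (x - 1) x :=
    ((continuous_add_const c).rpow_const fun _ => Or.inr hq₀.le).intervalIntegrable _ _
  have hrpow : IntervalIntegrable (fun t : ℝ => t ^ q) MeasureTheory.volume (x - 1) x :=
    intervalIntegrable_rpow' hq
  have hI : ∫ t in (x - 1)..x, (2 * (t + 1) ^ q - (t + 2) ^ q - t ^ q)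
      = (rpowSecondDiff (q + 1) x - rpowSecondDiff (q + 1) (x + 1)) / (q + 1) := by
    rw [integral_sub (((hshift 1).const_mul 2).sub (hshift 2)) hrpow,
      integral_sub ((hshift 1).const_mul 2) (hshift 2), integral_const_mul,
      integral_add_rpow hq, integral_add_rpow hq, integral_rpow (Or.inl hq)]
    simp only [rpowSecondDiff, sub_add_cancel]
    ring_nf
  have hpos : 0 < ∫ t in (x - 1)..x, (2 * (t + 1) ^ q - (t + 2) ^ q - t ^ q) := by
    refine intervalIntegral_pos_of_pos_on ((((hshift 1).const_mul 2).sub (hshift 2)).sub hrpow)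
      (fun t ht => ?_) (by linarith)
    have := rpow_add_rpow_add_two_lt hq₀ (by linarith) (by linarith [ht.1] : 0 ≤ t)
    linarith
  rw [hI] at hpos
  linarith [(div_pos_iff_of_pos_right (by linarith : (0 : ℝ) < q + 1)).1 hpos]

lemma Gamma_two_sub {α : ℝ} (hα : α < 1) : Gamma (2 - α) = (1 - α) * Gamma (1 - α) := by
  rw [← Gamma_add_one (by linarith)]
  ring_nf

lemma Gamma_three_sub {α : ℝ} (hα : α < 1) : Gamma (3 - α) = (2 - α) * Gamma (2 - α) := by
  rw [← Gamma_add_one (by linarith)]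
  ring_nf

lemma integral_omegaK_sub {α : ℝ} (hα : α < 1) (t a b : ℝ) :
    ∫ s in a..b, omegaK α (t - s) = ((t - a) ^ (1 - α) - (t - b) ^ (1 - α)) / Gamma (2 - α) := by
  simp only [omegaK]
  rw [integral_div, integral_comp_sub_left (· ^ (-α)), integral_rpow (Or.inl (by linarith)),
    neg_add_eq_sub, Gamma_two_sub hα, div_div]

lemma integral_sub_mul_rpow {τ q : ℝ} (hτ : 0 ≤ τ) (hq : -1 < q) (m k : ℝ) (hk : 1 ≤ k) :
    ∫ t in ((m - 1) * τ)..(m * τ), (t - (m - k) * τ) ^ q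
      = τ ^ (q + 1) * (k ^ (q + 1) - (k - 1) ^ (q + 1)) / (q + 1) := by
  rw [integral_sub_rpow hq, show m * τ - (m - k) * τ = k * τ by ring,
    show (m - 1) * τ - (m - k) * τ = (k - 1) * τ by ring,
    mul_rpow (by linarith) hτ, mul_rpow (by linarith) hτ]
  ring

lemma one_lt_Gamma_three_sub {α : ℝ} (hα : α < 1) : 1 < Gamma (3 - α) := by
  simpa [Gamma_two] using Gamma_strictMonoOn_Ici (mem_Ici.2 le_rfl) (mem_Ici.2 (by linarith))
    (by linarith : (2 : ℝ) < 3 - α)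

lemma rpowSecondDiff_one {p : ℝ} (hp : 0 < p) : rpowSecondDiff p 1 = 2 ^ p - 2 := by
  rw [rpowSecondDiff, one_add_one_eq_two, sub_self, one_rpow, zero_rpow hp.ne']
  ring

section Coefficients

variable {τ α : ℝ}

lemma tau_mul_acoef_one (hτ : 0 < τ) (hα : α < 1) (n : ℕ) :
    τ * acoef τ α n 1 = τ ^ (1 - α) / Gamma (3 - α) := by
  have hinner : EqOn
      (fun t => ∫ s in ((n - (1 : ℕ)) * τ)..(min t ((n - (1 : ℕ) + 1) * τ)), omegaK α (t - s))
      (fun t => (t - (n - 1) * τ) ^ (1 - α) / Gamma (2 - α)) (uIcc ((n - 1) * τ) (n * τ)) := by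
    intro t ht
    rw [uIcc_of_le (by nlinarith)] at ht
    simp only [Nat.cast_one, sub_add_cancel]
    rw [min_eq_left ht.2, integral_omegaK_sub hα, sub_self, zero_rpow (by linarith), sub_zero]
  rw [acoef, integral_congr hinner, integral_div,
    integral_sub_mul_rpow hτ.le (by linarith) _ _ le_rfl, sub_self, zero_rpow (by linarith),
    rpow_add_one hτ.ne', show 1 - α + 1 = 2 - α by ring, Gamma_three_sub hα, one_rpow, sub_zero]
  field_simp

lemma tau_mul_acoef_of_two_le (hτ : 0 < τ) (hα : α < 1) (n : ℕ) {j : ℕ} (hj : 2 ≤ j) :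
    τ * acoef τ α n j = τ ^ (1 - α) / Gamma (3 - α) * rpowSecondDiff (2 - α) (j - 1) := by
  have hj' : (2 : ℝ) ≤ j := by exact_mod_cast hj
  have hinner : EqOn
      (fun t => ∫ s in ((n - j) * τ)..(min t ((n - j + 1) * τ)), omegaK α (t - s))
      (fun t => ((t - (n - j) * τ) ^ (1 - α) - (t - (n - (j - 1)) * τ) ^ (1 - α)) / Gamma (2 - α))
      (uIcc ((n - 1) * τ) (n * τ)) := by
    intro t ht
    rw [uIcc_of_le (by nlinarith)] at ht
    have hmin : ((n : ℝ) - j + 1) * τ ≤ t := by nlinarith [ht.1]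
    simp only
    rw [min_eq_right hmin, integral_omegaK_sub hα, show ((n : ℝ) - j + 1) = n - (j - 1) by ring]
  have hcont (c : ℝ) : Continuous fun t : ℝ => (t - c) ^ (1 - α) :=
    (continuous_sub_right c).rpow_const fun _ => Or.inr (by linarith)
  rw [acoef, integral_congr hinner, integral_div,
    integral_sub ((hcont _).intervalIntegrable _ _) ((hcont _).intervalIntegrable _ _),
    integral_sub_mul_rpow hτ.le (by linarith) _ _ (by linarith),
    integral_sub_mul_rpow hτ.le (by linarith) _ _ (by linarith),
    rpow_add_one hτ.ne', show 1 - α + 1 = 2 - α by ring, Gamma_three_sub hα, rpowSecondDiff,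
    sub_add_cancel]
  field_simp
  ring

lemma bcoef_one (hτ : 0 < τ) (hα : α < 1) (n : ℕ) :
    bcoef τ α n 1 = 1 + τ ^ (1 - α) / Gamma (3 - α) := by
  rw [bcoef, if_pos rfl, tau_mul_acoef_one hτ hα]

lemma bcoef_of_two_le (hτ : 0 < τ) (hα : α < 1) (n : ℕ) {j : ℕ} (hj : 2 ≤ j) :
    bcoef τ α n j = τ ^ (1 - α) / Gamma (3 - α) * rpowSecondDiff (2 - α) (j - 1) := by
  rw [bcoef, if_neg (by omega), tau_mul_acoef_of_two_le hτ hα n hj]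

lemma bcoef_pos (hτ : 0 < τ) (hα : α < 1) {n j : ℕ} (hj : 1 ≤ j) : 0 < bcoef τ α n j := by
  have hκ : 0 < τ ^ (1 - α) / Gamma (3 - α) :=
    div_pos (rpow_pos_of_pos hτ _) (Gamma_pos_of_pos (by linarith))
  obtain rfl | hj₂ := hj.eq_or_lt
  · rw [bcoef_one hτ hα]
    linarith
  · have hj' : (2 : ℝ) ≤ j := by exact_mod_cast hj₂
    rw [bcoef_of_two_le hτ hα n hj₂]
    exact mul_pos hκ (rpowSecondDiff_pos (by linarith) (by linarith))

lemma bcoef_succ_lt (hτ : 0 < τ) (hτ₁ : τ ≤ 1) (hα : α ∈ Ioo 0 1) (n : ℕ) {j : ℕ} (hj : 1 ≤ j) :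
    bcoef τ α n (j + 1) < bcoef τ α n j := by
  obtain ⟨hα₀, hα₁⟩ := hα
  set κ := τ ^ (1 - α) / Gamma (3 - α)
  have hΓ := one_lt_Gamma_three_sub hα₁
  have hκ : 0 < κ := div_pos (rpow_pos_of_pos hτ _) (by linarith)
  have hκ₁ : κ ≤ 1 :=
    (div_le_one (by linarith)).2 ((rpow_le_one hτ.le hτ₁ (by linarith)).trans hΓ.le)
  obtain rfl | hj₂ := hj.eq_or_lt
  · have h4 : (2 : ℝ) ^ (2 - α) < 4 :=
      calc (2 : ℝ) ^ (2 - α) < 2 ^ (2 : ℝ) := rpow_lt_rpow_of_exponent_lt one_lt_two (by linarith)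
        _ = 4 := by norm_num
    rw [bcoef_one hτ hα₁, bcoef_of_two_le hτ hα₁ n le_rfl,
      show ((1 + 1 : ℕ) : ℝ) - 1 = 1 by norm_num, rpowSecondDiff_one (by linarith)]
    have : κ * (2 ^ (2 - α) - 2) < κ * 2 := mul_lt_mul_of_pos_left (by linarith) hκ
    linarith
  · rw [bcoef_of_two_le hτ hα₁ n hj₂, bcoef_of_two_le hτ hα₁ n (by omega)]
    refine mul_lt_mul_of_pos_left ?_ hκ
    have hj' : (1 : ℝ) ≤ j - 1 := by
      have : (2 : ℝ) ≤ j := by exact_mod_cast hj₂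
      linarith
    simpa using rpowSecondDiff_add_one_lt (by linarith) (by linarith) hj'

end Coefficients

theorem stmt2 (T : ℝ) (hT : 0 < T) (N : ℕ) (hN : 0 < N) (τ : ℝ) (hτ : τ = T / N)
    (hτ1 : τ ≤ 1) (α : ℝ) (hα : α ∈ Set.Ioo (0 : ℝ) 1) :
    ∀ n : ℕ, 1 ≤ n → n ≤ N →
      (∀ j j' : ℕ, 1 ≤ j → j < j' → j' ≤ n → bcoef τ α n j' < bcoef τ α n j) ∧
      0 < bcoef τ α n n := by
  have hτ0 : 0 < τ := hτ ▸ div_pos hT (Nat.cast_pos.2 hN)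
  intro n hn _
  refine ⟨fun j j' hj hjj' _ => ?_, bcoef_pos hτ0 hα.2 hn⟩
  exact Nat.rel_of_forall_rel_succ_of_le_of_lt (· > ·)
    (fun i hi => bcoef_succ_lt hτ0 hτ1 hα n hi) hj hjj'
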